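/- arXiv:1112.5330 — 2 statements merged into one kernel-verified Lean document; each statement's English description precedes it below -/
import Mathlib

section
/- Let X and Y be separable Hilbert spaces such that Y is compactly and densely embedded into X. Then there exists an orthonormal basis (e_n) of X consisting of elements of Y that is simultaneously orthogonal in Y, and moreover the norms satisfy ‖e_n‖_Y → ∞ (equivalently ‖e_n‖_Y^{-1} → 0). -/
/-!
`T = ι ι†` is a compact, self-adjoint operator on `X`, and it is positive definite because
`ker ι† = (range ι)ᗮ = 0`. By the spectral theorem for compact self-adjoint operators, `X` has
a Hilbert basis of eigenvectors `T w n = μ n • w n`, which separability and infinite dimension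
let us index by `ℕ`; `μ n > 0`, and `μ n = ‖T (w n)‖ → 0` since a compact operator maps
orthonormal sequences to null sequences. Then `e n = (μ n)⁻¹ • ι† (w n)` satisfies
`ι (e n) = w n` and `⟪e n, e m⟫_Y = (μ n)⁻¹ ⟪w n, w m⟫_X`, so the `e n` are orthogonal in `Y`
with `‖e n‖⁻¹ = √(μ n) → 0`.
-/

open Filter Topology Submodule Module.End
open scoped InnerProduct InnerProductSpace

universe u v

section InnerProductSpace

variable {𝕜 : Type*} {E : Type*} [RCLike 𝕜] [NormedAddCommGroup E] [InnerProductSpace 𝕜 E]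

theorem Orthonormal.dist_eq {ι : Type*} {v : ι → E} (hv : Orthonormal 𝕜 v) {i j : ι}
    (hij : i ≠ j) : dist (v i) (v j) = √2 := by
  have h : ‖v i - v j‖ ^ 2 = 2 := by
    rw [@norm_sub_sq 𝕜, hv.norm_eq_one, hv.norm_eq_one, hv.inner_eq_zero hij]
    norm_num
  rw [dist_eq_norm, ← h, Real.sqrt_sq (norm_nonneg _)]

theorem Orthonormal.countable [TopologicalSpace.SeparableSpace E] {ι : Type*} {v : ι → E}
    (hv : Orthonormal 𝕜 v) : Countable ι := by
  refine Pairwise.countable_of_isOpen_disjoint (s := fun i => Metric.ball (v i) (1 / 2))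
    (fun i j hij => Metric.ball_disjoint_ball ?_) (fun _ => Metric.isOpen_ball)
    (fun _ => Metric.nonempty_ball.2 (by norm_num))
  linarith [hv.dist_eq hij, Real.one_lt_sqrt_two]

theorem Orthonormal.tendsto_inner_zero {v : ℕ → E} (hv : Orthonormal 𝕜 v) (x : E) :
    Tendsto (fun n => ⟪v n, x⟫_𝕜) atTop (𝓝 0) := by
  have h := (hv.inner_products_summable x).tendsto_atTop_zero
  rw [tendsto_zero_iff_norm_tendsto_zero]
  simpa [Real.sqrt_sq (norm_nonneg _), norm_inner_symm] using h.sqrt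

theorem HilbertBasis.mem_orthogonal_of_forall_inner_eq_zero {K : Submodule 𝕜 E} [CompleteSpace K]
    {ι : Type*} (b : HilbertBasis ι 𝕜 K) {x : E} (hx : ∀ i, ⟪x, (b i : E)⟫_𝕜 = 0) : x ∈ Kᗮ := by
  let ℓ : K →L[𝕜] 𝕜 := innerSL 𝕜 x ∘L K.subtypeL
  have hspan : span 𝕜 (Set.range b) ≤ ℓ.ker := by
    rw [span_le]
    rintro _ ⟨i, rfl⟩
    simpa [ℓ] using hx i
  have htop := (span 𝕜 (Set.range b)).topologicalClosure_minimal hspan ℓ.isClosed_ker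
  rw [b.dense_span, top_le_iff] at htop
  rw [mem_orthogonal']
  intro y hy
  simpa [ℓ] using htop.ge (mem_top (x := ⟨y, hy⟩))

end InnerProductSpace

theorem infinite_of_topologicalClosure_span_eq_top {𝕜 E ι : Type*} [NontriviallyNormedField 𝕜]
    [CompleteSpace 𝕜] [NormedAddCommGroup E] [NormedSpace 𝕜 E] {v : ι → E}
    (hdense : (span 𝕜 (Set.range v)).topologicalClosure = ⊤) (hE : ¬ FiniteDimensional 𝕜 E) :
    Infinite ι := by
  by_contra hfin
  have : Finite ι := not_infinite_iff_finite.mp hfin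
  have := FiniteDimensional.span_of_finite 𝕜 (Set.finite_range v)
  have hspan : span 𝕜 (Set.range v) = ⊤ := by
    rw [← hdense,
      (span 𝕜 (Set.range v)).closed_of_finiteDimensional.submodule_topologicalClosure_eq]
  exact hE (Module.finite_def.mpr (hspan ▸ fg_span (Set.finite_range v)))

section Operators

variable {𝕜 : Type u} {E : Type v} {F : Type*} [RCLike 𝕜] [NormedAddCommGroup E]
  [InnerProductSpace 𝕜 E] [NormedAddCommGroup F] [InnerProductSpace 𝕜 F] [CompleteSpace E]

theorem ContinuousLinearMap.injective_adjoint_of_denseRange [CompleteSpace F] {A : E →L[𝕜] F}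
    (hA : DenseRange A) : Function.Injective (A†) := by
  have : (A : E →ₗ[𝕜] F).rangeᗮ = ⊥ := by
    rw [← topologicalClosure_eq_top_iff, ← dense_iff_topologicalClosure_eq_top]
    exact hA
  rwa [A.orthogonal_range, LinearMap.ker_eq_bot] at this

theorem ContinuousLinearMap.inner_adjoint_apply_of_apply_eq_smul [CompleteSpace F]
    (S : F →L[𝕜] E) (x : E) {y : E} {μ : 𝕜} (hy : (S ∘L S†) y = μ • y) :
    ⟪(S†) x, (S†) y⟫_𝕜 = μ * ⟪x, y⟫_𝕜 := by
  rw [adjoint_inner_left, ← comp_apply, hy, inner_smul_right]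

theorem IsCompactOperator.tendsto_apply_orthonormal [CompleteSpace F] {T : E →L[𝕜] F}
    (hT : IsCompactOperator T) {v : ℕ → E} (hv : Orthonormal 𝕜 v) :
    Tendsto (fun n => T (v n)) atTop (𝓝 0) := by
  obtain ⟨K, hK, hTK⟩ := hT.image_subset_compact_of_bounded
    (Metric.isBounded_closedBall (x := (0 : E)) (r := 1))
  have hmem : ∀ n, T (v n) ∈ K := fun n => hTK ⟨v n, by simp [hv.norm_eq_one], rfl⟩
  refine tendsto_of_subseq_tendsto fun ns hns => ?_
  obtain ⟨y, -, φ, hφ, hy⟩ := hK.tendsto_subseq fun n => hmem (ns n)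
  refine ⟨φ, ?_⟩
  -- `v n ⇀ 0` weakly (Bessel), so a norm limit `y` of `T (v n)` satisfies `⟪y, y⟫ = 0`.
  suffices y = 0 by rwa [← this]
  have hweak : Tendsto (fun n => ⟪T (v (ns (φ n))), y⟫_𝕜) atTop (𝓝 0) := by
    simp_rw [← ContinuousLinearMap.adjoint_inner_right]
    exact (hv.tendsto_inner_zero _).comp (hns.comp hφ.tendsto_atTop)
  exact inner_self_eq_zero.mp (tendsto_nhds_unique (hy.inner tendsto_const_nhds) hweak)

theorem IsCompactOperator.exists_orthonormal_eigenvectors {T : E →L[𝕜] E}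
    (hT : IsCompactOperator T) (hT' : T.IsSymmetric) :
    ∃ (ι : Type (max u v)) (w : ι → E), Orthonormal 𝕜 w ∧
      (span 𝕜 (Set.range w)).topologicalClosure = ⊤ ∧ ∀ i, ∃ μ : 𝕜, T (w i) = μ • w i := by
  have (μ : 𝕜) : CompleteSpace (eigenspace (T : Module.End 𝕜 E) μ) := by
    rw [eigenspace_def]
    exact (ContinuousLinearMap.isClosed_ker (T - μ • 1)).completeSpace_coe
  choose s b _ using fun μ : 𝕜 => exists_hilbertBasis 𝕜 (eigenspace (T : Module.End 𝕜 E) μ)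
  refine ⟨Σ μ, s μ, fun a => (b a.1 a.2 : E),
    hT'.orthogonalFamily_eigenspaces.orthonormal_sigma_orthonormal fun μ => (b μ).orthonormal,
    ?_, fun a => ⟨a.1, mem_eigenspace_iff.mp (b a.1 a.2).2⟩⟩
  rw [topologicalClosure_eq_top_iff, eq_bot_iff,
    ← ContinuousLinearMap.orthogonalComplement_iSup_eigenspaces_eq_bot hT hT', ← iInf_orthogonal]
  exact fun x hx => Submodule.mem_iInf _ |>.mpr fun μ =>
    (b μ).mem_orthogonal_of_forall_inner_eq_zero fun i =>
      (mem_orthogonal' _ _).mp hx _ (subset_span ⟨⟨μ, i⟩, rfl⟩)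

theorem IsCompactOperator.exists_orthonormal_eigenvectors_nat
    [TopologicalSpace.SeparableSpace E] (hE : ¬ FiniteDimensional 𝕜 E) {T : E →L[𝕜] E}
    (hT : IsCompactOperator T) (hT' : T.IsSymmetric) :
    ∃ (w : ℕ → E) (μ : ℕ → 𝕜), Orthonormal 𝕜 w ∧
      (span 𝕜 (Set.range w)).topologicalClosure = ⊤ ∧
      (∀ n, T (w n) = μ n • w n) ∧ Tendsto μ atTop (𝓝 0) := by
  obtain ⟨ι, w, hw, hspan, heig⟩ := hT.exists_orthonormal_eigenvectors hT'
  choose μ hμ using heig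
  have := hw.countable
  have := infinite_of_topologicalClosure_span_eq_top hspan hE
  obtain ⟨e⟩ := nonempty_equiv_of_countable (α := ℕ) (β := ι)
  have hwe : Orthonormal 𝕜 (w ∘ e) := hw.comp e e.injective
  refine ⟨w ∘ e, μ ∘ e, hwe, by rwa [Set.range_comp, e.range_eq_univ, Set.image_univ],
    fun n => hμ (e n), ?_⟩
  have hTw := hT.tendsto_apply_orthonormal hwe
  rw [tendsto_zero_iff_norm_tendsto_zero] at hTw ⊢
  convert hTw using 2 with n
  simp [hμ, norm_smul, hw.norm_eq_one]

end Operators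

theorem stmt0_general {X Y : Type*}
    [NormedAddCommGroup X] [InnerProductSpace ℝ X] [CompleteSpace X]
    [TopologicalSpace.SeparableSpace X]
    [NormedAddCommGroup Y] [InnerProductSpace ℝ Y] [CompleteSpace Y]
    (hinfd : ¬ FiniteDimensional ℝ X)
    (ι : Y →L[ℝ] X)
    (hcomp : IsCompactOperator ι) (hdense : DenseRange ι) :
    ∃ e : ℕ → Y,
      Orthonormal ℝ (fun n => ι (e n)) ∧
      (Submodule.span ℝ (Set.range fun n => ι (e n))).topologicalClosure = ⊤ ∧
      (∀ n m, n ≠ m → @inner ℝ Y _ (e n) (e m) = 0) ∧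
      Tendsto (fun n => ‖e n‖⁻¹) atTop (nhds 0) := by
  obtain ⟨w, μ, hw, hspan, heig, hμ⟩ :=
    (hcomp.comp_clm (ι†)).exists_orthonormal_eigenvectors_nat hinfd
      (ContinuousLinearMap.isPositive_self_comp_adjoint ι).isSymmetric
  have hgram (n m : ℕ) : ⟪(ι†) (w n), (ι†) (w m)⟫_ℝ = μ m * ⟪w n, w m⟫_ℝ :=
    ι.inner_adjoint_apply_of_apply_eq_smul (w n) (heig m)
  have hsq (n : ℕ) : ‖(ι†) (w n)‖ ^ 2 = μ n := by
    rw [← real_inner_self_eq_norm_sq, hgram, real_inner_self_eq_norm_sq, hw.norm_eq_one,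
      one_pow, mul_one]
  have hμpos (n : ℕ) : 0 < μ n := hsq n ▸ pow_pos (norm_pos_iff.mpr
    ((ContinuousLinearMap.injective_adjoint_of_denseRange hdense).ne_iff' (map_zero _) |>.mpr
      (hw.ne_zero n))) 2
  have hιe (n : ℕ) : ι ((μ n)⁻¹ • (ι†) (w n)) = w n := by
    rw [map_smul, ← ContinuousLinearMap.comp_apply, heig, smul_smul,
      inv_mul_cancel₀ (hμpos n).ne', one_smul]
  have hinner (n m : ℕ) :
      ⟪(μ n)⁻¹ • (ι†) (w n), (μ m)⁻¹ • (ι†) (w m)⟫_ℝ = (μ n)⁻¹ * ⟪w n, w m⟫_ℝ := by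
    rw [real_inner_smul_left, real_inner_smul_right, hgram]
    field_simp [(hμpos m).ne']
  refine ⟨fun n => (μ n)⁻¹ • (ι†) (w n), by simpa only [hιe], by simpa only [hιe],
    fun n m hnm => by rw [hinner, hw.inner_eq_zero hnm, mul_zero], ?_⟩
  have hnorm (n : ℕ) : ‖(μ n)⁻¹ • (ι†) (w n)‖⁻¹ = √(μ n) := by
    rw [norm_smul, ← Real.sqrt_sq (norm_nonneg ((ι†) (w n))), hsq, norm_inv,
      Real.norm_of_nonneg (hμpos n).le, mul_inv, inv_inv, ← div_eq_mul_inv, Real.div_sqrt]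
  simpa only [hnorm, Real.sqrt_zero] using hμ.sqrt

/-- Simultaneous diagonalization: existence of an orthonormal basis of `X`
consisting of elements of `Y`, simultaneously orthogonal in `Y`, with
`‖e n‖⁻¹ → 0`. -/
theorem stmt0 {X Y : Type*}
    [NormedAddCommGroup X] [InnerProductSpace ℝ X] [CompleteSpace X]
    [TopologicalSpace.SeparableSpace X]
    [NormedAddCommGroup Y] [InnerProductSpace ℝ Y] [CompleteSpace Y]
    [TopologicalSpace.SeparableSpace Y]
    (hinfd : ¬ FiniteDimensional ℝ X)
    (ι : Y →L[ℝ] X) (hinj : Function.Injective ι)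
    (hcomp : IsCompactOperator ι) (hdense : DenseRange ι) :
    ∃ e : ℕ → Y,
      Orthonormal ℝ (fun n => ι (e n)) ∧
      (Submodule.span ℝ (Set.range fun n => ι (e n))).topologicalClosure = ⊤ ∧
      (∀ n m, n ≠ m → @inner ℝ Y _ (e n) (e m) = 0) ∧
      Tendsto (fun n => ‖e n‖⁻¹) atTop (nhds 0) :=
  stmt0_general hinfd ι hcomp hdense
end

section
/- Let X and Y be separable Hilbert spaces with Y compactly and densely embedded into X, and let (e_n) be an orthonormal basis of X contained in Y and simultaneously orthogonal in Y (as in the simultaneous diagonalization construction). Let π_N denote the X-orthogonal projection onto span{e_1,…,e_N}. Then sup over y in the unit ball of Y of ‖y − π_N y‖_X tends to 0 as N → ∞. -/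
/-!
The image `K` of the unit ball of `Y` is relatively compact in `X`, and the distances
`x ↦ infDist x V_N` to the increasing spans `V_N` are continuous, decrease in `N` and tend to
`0` at every point, because `⋃ N, V_N` is dense. By Dini's theorem they tend to `0` uniformly
on the compact closure of `K`, which is the claim.
-/

open Filter Topology Metric Set

section InfDist

variable {α ι : Type*} [PseudoMetricSpace α] [Preorder ι] {V : ι → Set α}

theorem tendsto_infDist_of_mem_closure_iUnion (hV : Monotone V) {x : α}
    (hx : x ∈ closure (⋃ i, V i)) : Tendsto (fun i => infDist x (V i)) atTop (𝓝 0) := by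
  refine tendsto_order.2
    ⟨fun a ha => Eventually.of_forall fun i => ha.trans_le infDist_nonneg, fun ε hε => ?_⟩
  obtain ⟨y, hy, hxy⟩ := mem_closure_iff.1 hx ε hε
  obtain ⟨i, hi⟩ := mem_iUnion.1 hy
  filter_upwards [eventually_ge_atTop i] with j hij
  exact (infDist_le_dist_of_mem (hV hij hi)).trans_lt hxy

theorem tendstoUniformlyOn_infDist_of_subset_closure_iUnion (hV : Monotone V)
    (hne : ∀ i, (V i).Nonempty) {K : Set α} (hK : IsCompact K) (hKV : K ⊆ closure (⋃ i, V i)) :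
    TendstoUniformlyOn (fun i x => infDist x (V i)) 0 atTop K :=
  Antitone.tendstoUniformlyOn_of_forall_tendsto hK
    (fun _ => (continuous_infDist_pt _).continuousOn)
    (fun _ _ _ _ hij => infDist_le_infDist_of_subset (hV hij) (hne _))
    continuousOn_const (fun _ hx => tendsto_infDist_of_mem_closure_iUnion hV (hKV hx))

end InfDist

theorem TendstoUniformlyOn.tendsto_iSup_comp {α β ι : Type*} {F : ι → α → ℝ} {K : Set α}
    {l : Filter ι} (hF : TendstoUniformlyOn F 0 l K) (hF0 : ∀ i x, 0 ≤ F i x) {f : β → α}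
    (hf : ∀ b, f b ∈ K) : Tendsto (fun i => ⨆ b, F i (f b)) l (𝓝 0) := by
  rw [Metric.tendsto_nhds]
  intro ε hε
  filter_upwards [Metric.tendstoUniformlyOn_iff.1 hF (ε / 2) (half_pos hε)] with i hi
  have hle : ⨆ b, F i (f b) ≤ ε / 2 := Real.iSup_le
    (fun b => by simpa [dist_zero_left, abs_of_nonneg (hF0 i (f b))] using (hi _ (hf b)).le)
    (half_pos hε).le
  rw [Real.dist_0_eq_abs, abs_of_nonneg (Real.iSup_nonneg fun b => hF0 i (f b))]
  linarith

theorem Submodule.dense_iUnion_span_image_Iio {R E : Type*} [Semiring R] [AddCommMonoid E]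
    [Module R E] [TopologicalSpace E] [ContinuousAdd E] [ContinuousConstSMul R E] (v : ℕ → E)
    (hv : (span R (range v)).topologicalClosure = ⊤) :
    Dense (⋃ N, (span R (v '' Iio N) : Set E)) := by
  have hmono : Monotone fun N => span R (v '' Iio N) := fun _ _ h =>
    span_mono (image_mono (Iio_subset_Iio h))
  rw [← coe_iSup_of_directed _ hmono.directed_le, ← span_iUnion, ← image_iUnion, iUnion_Iio,
    image_univ, dense_iff_closure_eq, ← topologicalClosure_coe, hv, top_coe]

theorem stmt1_general {X Y : Type*}
    [NormedAddCommGroup X] [InnerProductSpace ℝ X]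
    [NormedAddCommGroup Y] [InnerProductSpace ℝ Y]
    (ι : Y →L[ℝ] X)
    (hcomp : IsCompactOperator ι)
    (e : ℕ → Y)
    (he2 : (Submodule.span ℝ (Set.range fun n => ι (e n))).topologicalClosure = ⊤) :
    Tendsto
      (fun N : ℕ =>
        ⨆ y : {y : Y // ‖y‖ ≤ 1},
          Metric.infDist (ι y)
            ((Submodule.span ℝ ((fun n => ι (e n)) '' Set.Iio N) : Submodule ℝ X) : Set X))
      atTop (nhds 0) := by
  set V : ℕ → Submodule ℝ X := fun N => Submodule.span ℝ ((fun n => ι (e n)) '' Iio N)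
  have hV : Monotone fun N => (V N : Set X) := fun _ _ h =>
    Submodule.span_mono (image_mono (Iio_subset_Iio h))
  have hK : IsCompact (closure (ι '' closedBall 0 1)) :=
    hcomp.isCompact_closure_image_closedBall (f := (ι : Y →ₗ[ℝ] X)) 1
  have hdenseV : closure (⋃ N, (V N : Set X)) = univ :=
    (Submodule.dense_iUnion_span_image_Iio _ he2).closure_eq
  refine (tendstoUniformlyOn_infDist_of_subset_closure_iUnion hV (fun N => (V N).nonempty) hK
    (hdenseV ▸ subset_univ _)).tendsto_iSup_comp (fun _ _ => infDist_nonneg) fun y => ?_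
  exact subset_closure ⟨y, mem_closedBall_zero_iff.2 y.2, rfl⟩

/-- Uniform approximation on the unit ball of `Y` by the `X`-orthogonal
projections onto the spans of the first `N` basis vectors. -/
theorem stmt1 {X Y : Type*}
    [NormedAddCommGroup X] [InnerProductSpace ℝ X] [CompleteSpace X]
    [TopologicalSpace.SeparableSpace X]
    [NormedAddCommGroup Y] [InnerProductSpace ℝ Y] [CompleteSpace Y]
    [TopologicalSpace.SeparableSpace Y]
    (ι : Y →L[ℝ] X) (hinj : Function.Injective ι)
    (hcomp : IsCompactOperator ι) (hdense : DenseRange ι)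
    (e : ℕ → Y)
    (he1 : Orthonormal ℝ (fun n => ι (e n)))
    (he2 : (Submodule.span ℝ (Set.range fun n => ι (e n))).topologicalClosure = ⊤)
    (he3 : ∀ n m, n ≠ m → @inner ℝ Y _ (e n) (e m) = 0) :
    Tendsto
      (fun N : ℕ =>
        ⨆ y : {y : Y // ‖y‖ ≤ 1},
          Metric.infDist (ι y)
            ((Submodule.span ℝ ((fun n => ι (e n)) '' Set.Iio N) : Submodule ℝ X) : Set X))
      atTop (nhds 0) :=
  stmt1_general ι hcomp e he2
end
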